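/- arXiv:1509.01355 — 5 statements merged into one kernel-verified Lean document; each statement's English description precedes it below -/
import Mathlib

section
/- For a tree-shift X the following are equivalent: (i) X is irreducible; (ii) for every pair of blocks u ∈ B_n(X) and v ∈ B_m(X) (with n, m ∈ ℕ possibly different) there exist a family {P_w}_{w ∈ Σ^{n−1}} of complete prefix sets and a tree t ∈ X such that the n-block of t rooted at ε equals u and the m-block of t rooted at wx equals v for every w ∈ Σ^{n−1} and every x ∈ P_w; (iii) for every pair of blocks u ∈ B_n(X) and v ∈ B_m(X) there exist finitely many complete prefix sets P_1,…,P_l and a tree t ∈ X such that the n-block of t rooted at ε equals u and, for each w ∈ Σ^{n−1}, there is some k ∈ {1,…,l} with the m-block of t rooted at wx equal to v for all x ∈ P_k. -/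
/-!  Tree-shifts on the binary tree: basic definitions. -/

/-- An infinite tree over alphabet `A`: a labeling of all finite words over
`Σ = {0,1}` (encoded as `List Bool`). -/
abbrev InfTree (A : Type*) : Type _ := List Bool → A

/-- The shift map `σ_w`: `(σ_w t)_x = t_{wx}`. -/
def treeShift {A : Type*} (w : List Bool) (t : InfTree A) : InfTree A :=
  fun x => t (w ++ x)

/-- A pattern: a labeling of a finite prefix-closed set of words. -/
structure TreePattern (A : Type*) where
  supp : Finset (List Bool)
  prefixClosed : ∀ x ∈ supp, ∀ y : List Bool, y <+: x → y ∈ supp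
  label : (x : List Bool) → x ∈ supp → A

/-- The pattern `p` occurs in the tree `t` rooted at the node `x`. -/
def TreePattern.occursAt {A : Type*} (p : TreePattern A) (t : InfTree A) (x : List Bool) : Prop :=
  ∀ y (hy : y ∈ p.supp), p.label y hy = t (x ++ y)

/-- The tree-shift `X_F` defined by a set `F` of forbidden patterns. -/
def treeShiftOf {A : Type*} (F : Set (TreePattern A)) : Set (InfTree A) :=
  { t | ∀ p ∈ F, ∀ x : List Bool, ¬ p.occursAt t x }

/-- A subset of trees is a tree-shift if it is `X_F` for some forbidden set `F`. -/
def IsTreeShift {A : Type*} (X : Set (InfTree A)) : Prop :=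
  ∃ F : Set (TreePattern A), X = treeShiftOf F

/-- A tree-shift of finite type: `X_F` for some finite forbidden set `F`. -/
def IsTSFT {A : Type*} (X : Set (InfTree A)) : Prop :=
  ∃ F : Set (TreePattern A), F.Finite ∧ X = treeShiftOf F

/-- A Markov tree-shift: `X_F` for a finite forbidden set `F` consisting of 2-blocks,
i.e. patterns with support `Σ_1 = {ε, 0, 1}`. -/
def IsMarkovTS {A : Type*} (X : Set (InfTree A)) : Prop :=
  ∃ F : Set (TreePattern A), F.Finite ∧
    (∀ p ∈ F, p.supp = ({[], [false], [true]} : Finset (List Bool))) ∧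
    X = treeShiftOf F

/-- The `n`-block of `t` rooted at `x` equals `u`; an `n`-block is recorded as a function
on all words, only its values on words of length `< n` (i.e. on `Σ_{n-1}`) are relevant. -/
def blockEqAt {A : Type*} (t : InfTree A) (x : List Bool) (n : ℕ) (u : List Bool → A) : Prop :=
  ∀ y : List Bool, y.length < n → t (x ++ y) = u y

/-- `u ∈ B_n(X)` : the `n`-block `u` appears in some tree of `X`. -/
def memBlocks {A : Type*} (X : Set (InfTree A)) (n : ℕ) (u : List Bool → A) : Prop :=
  ∃ t ∈ X, ∃ x : List Bool, blockEqAt t x n u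

/-- The maximal length `|P|` of a word in a finite set of words `P`. -/
def maxLen (P : Finset (List Bool)) : ℕ := P.sup List.length

/-- `P` is a complete prefix set (CPS): it is a prefix set (no word of `P` is a prefix of
another word of `P`) and every word of length at least `|P|` has a prefix in `P`. -/
def IsCPS (P : Finset (List Bool)) : Prop :=
  (∀ p ∈ P, ∀ q ∈ P, p <+: q → p = q) ∧
  (∀ x : List Bool, maxLen P ≤ x.length → ∃ p ∈ P, p <+: x)

/-- Irreducibility of a tree-shift: any two `n`-blocks `u, v` of `X` can be realized in a
single tree of `X`, with `u` rooted at `ε` and `v` rooted at every word of a CPS whose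
words have length at least `n`. -/
def IrreducibleTS {A : Type*} (X : Set (InfTree A)) : Prop :=
  ∀ n : ℕ, 0 < n → ∀ u v : List Bool → A, memBlocks X n u → memBlocks X n v →
    ∃ t ∈ X, ∃ P : Finset (List Bool), IsCPS P ∧ (∀ x ∈ P, n ≤ x.length) ∧
      blockEqAt t [] n u ∧ ∀ x ∈ P, blockEqAt t x n v

/-- Mixing for tree-shifts: there are two CPS `P_0, P_1` connecting any two blocks, the
choice of the CPS being governed by the last letter `w_{n-1}` of `w ∈ Σ^{n-1}`. -/
def MixingTS {A : Type*} (X : Set (InfTree A)) : Prop :=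
  ∃ P0 P1 : Finset (List Bool), IsCPS P0 ∧ IsCPS P1 ∧
    ∀ n m : ℕ, 0 < n → 0 < m → ∀ u v : List Bool → A,
      memBlocks X n u → memBlocks X m v →
      ∃ t ∈ X, blockEqAt t [] n u ∧
        ∀ w : List Bool, w.length = n - 1 → ∀ b : Bool, w.getLast? = some b →
          ∀ x ∈ (if b then P1 else P0), blockEqAt t (w ++ x) m v

/-- A periodic tree: `σ_x t = t` for all `x` in some complete prefix set. -/
def IsPeriodicTree {A : Type*} (t : InfTree A) : Prop :=
  ∃ P : Finset (List Bool), IsCPS P ∧ ∀ x ∈ P, treeShift x t = t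

/-- The metric on trees: `d(t,t') = 2^{-n}` where `n` is the least length of a
disagreement, and `d(t,t') = 0` if `t = t'`. -/
noncomputable def treeDist {A : Type*} (t t' : InfTree A) : ℝ :=
  haveI := Classical.propDecidable (t = t')
  if t = t' then 0
  else (2⁻¹ : ℝ) ^ sInf { n : ℕ | ∃ x : List Bool, x.length = n ∧ t x ≠ t' x }

/-- `U` is an open subset of `X` in the topology induced by the metric `treeDist`. -/
def IsOpenIn {A : Type*} (X U : Set (InfTree A)) : Prop :=
  U ⊆ X ∧ ∀ t ∈ U, ∃ ε : ℝ, 0 < ε ∧ ∀ t' ∈ X, treeDist t t' < ε → t' ∈ U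

/-- The `m`-block of `t` rooted at `x`, as a function on `Σ_{m-1}`. -/
def blockFun {A : Type*} (m : ℕ) (t : InfTree A) (x : List Bool) :
    { y : List Bool // y.length < m } → A :=
  fun y => t (x ++ y.1)

/-- `φ` is a sliding block code on `X`: it is induced by a local `m`-block map `Φ`. -/
def IsSlidingBlockCode {A B : Type*} (X : Set (InfTree A)) (φ : InfTree A → InfTree B) : Prop :=
  ∃ m : ℕ, 0 < m ∧ ∃ Φ : ({ y : List Bool // y.length < m } → A) → B,
    ∀ t ∈ X, ∀ x : List Bool, φ t x = Φ (blockFun m t x)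

/-- `φ` is a conjugacy from `X` onto `Y`: an invertible sliding block code whose inverse
is also a sliding block code. -/
def IsConjugacy {A B : Type*} (X : Set (InfTree A)) (Y : Set (InfTree B))
    (φ : InfTree A → InfTree B) : Prop :=
  IsSlidingBlockCode X φ ∧ Set.MapsTo φ X Y ∧
    ∃ ψ : InfTree B → InfTree A, IsSlidingBlockCode Y ψ ∧ Set.MapsTo ψ Y X ∧
      (∀ t ∈ X, ψ (φ t) = t) ∧ (∀ s ∈ Y, φ (ψ s) = s)

/-- The `m`-th higher block code `φ_m`, sending `t` to the tree of `m`-blocks of `t`. -/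
def higherBlockMap {A : Type*} (m : ℕ) (t : InfTree A) :
    InfTree ({ y : List Bool // y.length < m } → A) :=
  fun x => blockFun m t x

/-- The vertex tree-shift determined by two transition matrices `A_0, A_1`. -/
def vertexTreeShift {n : ℕ} (A0 A1 : Matrix (Fin n) (Fin n) ℕ) : Set (InfTree (Fin n)) :=
  { t | ∀ x : List Bool,
      A0 (t x) (t (x ++ [false])) = 1 ∧ A1 (t x) (t (x ++ [true])) = 1 }

/-- `A_x = A_{x_l} A_{x_{l-1}} ⋯ A_{x_1}` for a word `x = x_1 … x_l`. -/
def matWord {n : ℕ} (A0 A1 : Matrix (Fin n) (Fin n) ℕ) :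
    List Bool → Matrix (Fin n) (Fin n) ℕ
  | [] => 1
  | b :: rest => matWord A0 A1 rest * (if b then A1 else A0)

/-- A 0-1 matrix. -/
def ZeroOne {n : ℕ} (M : Matrix (Fin n) (Fin n) ℕ) : Prop := ∀ i j, M i j ≤ 1

/-- The graph representation of the pair `(A_0, A_1)` is essential: every row and every
column of each matrix contains a nonzero entry. -/
def EssentialPair {n : ℕ} (A0 A1 : Matrix (Fin n) (Fin n) ℕ) : Prop :=
  (∀ i, ∃ j, 0 < A0 i j) ∧ (∀ j, ∃ i, 0 < A0 i j) ∧
  (∀ i, ∃ j, 0 < A1 i j) ∧ (∀ j, ∃ i, 0 < A1 i j)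

/-- An irreducible nonnegative matrix. -/
def MatIrreducible {n : ℕ} (A : Matrix (Fin n) (Fin n) ℕ) : Prop :=
  ∀ i j, ∃ k : ℕ, 1 ≤ k ∧ 0 < (A ^ k) i j

/-- A primitive nonnegative matrix. -/
def MatPrimitive {n : ℕ} (A : Matrix (Fin n) (Fin n) ℕ) : Prop :=
  ∃ k : ℕ, 1 ≤ k ∧ ∀ i j, 0 < (A ^ k) i j

/-- `V_w`: the set of possible terminal states of the labeled path `w`. -/
def Vset {n : ℕ} (M : Matrix (Fin n) (Fin n) ℕ) : Set (Fin n) := { j | ∃ i, 0 < M i j }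

/-- A cycle: a word `w = w_1 … w_k` with `k ≥ 2`, `w_k = w_1` and `V_w = V_{w_1}`. -/
def IsCycle {n : ℕ} (A0 A1 : Matrix (Fin n) (Fin n) ℕ) (w : List Bool) : Prop :=
  2 ≤ w.length ∧ w.getLast? = w.head? ∧
    Vset (matWord A0 A1 w) = Vset (matWord A0 A1 (w.take 1))

/-!
Two operations on complete prefix sets carry the argument. If every word of a CPS `P` is at
least as long as `w`, the left quotient `w⁻¹P = {x | wx ∈ P}` is again a CPS; conversely,
CPSs `Q_w` grafted below the words `w` of a CPS `R` form the CPS `⋃_{w ∈ R} w Q_w`. After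
extending the blocks to a common size, quotienting the single CPS of irreducibility by the
words of `Σ^{n-1}` gives (ii), and grafting the family of (ii) (used with `n + 1`) below `Σ^n`
gives back irreducibility. Since `Σ^{n-1}` is finite, (ii) and (iii) are the same condition.
-/

open Finset

noncomputable def wordsOfLength (n : ℕ) : Finset (List Bool) :=
  (List.finite_length_eq Bool n).toFinset

@[simp]
theorem mem_wordsOfLength {n : ℕ} {w : List Bool} : w ∈ wordsOfLength n ↔ w.length = n :=
  Set.Finite.mem_toFinset _

def graft (R : Finset (List Bool)) (Q : List Bool → Finset (List Bool)) : Finset (List Bool) :=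
  R.biUnion fun w => (Q w).image (w ++ ·)

theorem mem_graft {R : Finset (List Bool)} {Q : List Bool → Finset (List Bool)} {p : List Bool} :
    p ∈ graft R Q ↔ ∃ w ∈ R, ∃ x ∈ Q w, w ++ x = p := by
  simp [graft]

def leftQuotient (w : List Bool) (P : Finset (List Bool)) : Finset (List Bool) :=
  (P.filter (w <+: ·)).image (List.drop w.length)

@[simp]
theorem mem_leftQuotient {w x : List Bool} {P : Finset (List Bool)} :
    x ∈ leftQuotient w P ↔ w ++ x ∈ P := by
  constructor
  · simp only [leftQuotient, mem_image, mem_filter]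
    rintro ⟨_, ⟨hp, y, rfl⟩, rfl⟩
    simpa using hp
  · exact fun h => mem_image.2 ⟨w ++ x, mem_filter.2 ⟨h, List.prefix_append w x⟩, by simp⟩

theorem length_le_maxLen {P : Finset (List Bool)} {p : List Bool} (hp : p ∈ P) :
    p.length ≤ maxLen P :=
  le_sup hp

namespace IsCPS

variable {P R : Finset (List Bool)}

theorem nonempty (hP : IsCPS P) : P.Nonempty := by
  obtain ⟨p, hp, -⟩ := hP.2 (List.replicate (maxLen P) false) (by simp)
  exact ⟨p, hp⟩

theorem eq_of_prefix_of_prefix (hP : IsCPS P) {p q y : List Bool} (hp : p ∈ P) (hq : q ∈ P)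
    (hpy : p <+: y) (hqy : q <+: y) : p = q :=
  (List.prefix_or_prefix_of_prefix hpy hqy).elim (hP.1 p hp q hq) fun h => (hP.1 q hq p hp h).symm

theorem graft {Q : List Bool → Finset (List Bool)} (hR : IsCPS R) (hQ : ∀ w ∈ R, IsCPS (Q w)) :
    IsCPS (graft R Q) := by
  have hlen : ∀ w ∈ R, ∀ x ∈ Q w, w.length + x.length ≤ maxLen (_root_.graft R Q) :=
    fun w hw x hx => by simpa using length_le_maxLen (mem_graft.2 ⟨w, hw, x, hx, rfl⟩)
  refine ⟨?_, fun y hy => ?_⟩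
  · simp only [mem_graft]
    rintro _ ⟨w, hw, x, hx, rfl⟩ _ ⟨w', hw', x', hx', rfl⟩ hpre
    obtain rfl := hR.eq_of_prefix_of_prefix hw hw' ((List.prefix_append w x).trans hpre)
      (List.prefix_append w' x')
    rw [(hQ w hw).1 x hx x' hx' ((List.prefix_append_right_inj w).1 hpre)]
  · have hRy : maxLen R ≤ y.length := Finset.sup_le fun w hw => by
      obtain ⟨x, hx⟩ := (hQ w hw).nonempty
      have := hlen w hw x hx
      omega
    obtain ⟨w, hw, z, rfl⟩ := hR.2 y hRy
    have hQz : maxLen (Q w) ≤ z.length := Finset.sup_le fun x hx => by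
      have := hlen w hw x hx
      simp only [List.length_append] at hy
      omega
    obtain ⟨x, hx, hxz⟩ := (hQ w hw).2 z hQz
    exact ⟨w ++ x, mem_graft.2 ⟨w, hw, x, hx, rfl⟩, (List.prefix_append_right_inj w).2 hxz⟩

theorem leftQuotient (hP : IsCPS P) {w : List Bool} (hw : ∀ p ∈ P, w.length ≤ p.length) :
    IsCPS (leftQuotient w P) := by
  refine ⟨fun x hx x' hx' hxx' => ?_, fun z hz => ?_⟩
  · rw [mem_leftQuotient] at hx hx'
    exact List.append_cancel_left (hP.1 _ hx _ hx' ((List.prefix_append_right_inj w).2 hxx'))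
  -- pad `z` so that `w ++ z'` is long enough to meet `P`
  set z' := z ++ List.replicate (maxLen P) false
  obtain ⟨p, hp, hpz⟩ := hP.2 (w ++ z') (by simp [z']; omega)
  obtain ⟨x, rfl⟩ := List.prefix_of_prefix_length_le (List.prefix_append w z') hpz (hw p hp)
  have hx : x ∈ _root_.leftQuotient w P := mem_leftQuotient.2 hp
  exact ⟨x, hx, List.prefix_of_prefix_length_le ((List.prefix_append_right_inj w).1 hpz)
    (List.prefix_append z _) ((length_le_maxLen hx).trans hz)⟩

end IsCPS

theorem isCPS_wordsOfLength (n : ℕ) : IsCPS (wordsOfLength n) := by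
  have hn : n ≤ maxLen (wordsOfLength n) := by
    simpa using
      length_le_maxLen (mem_wordsOfLength.2 (List.length_replicate (n := n) (a := false)))
  refine ⟨fun p hp q hq hpq => hpq.eq_of_length ?_, fun y hy => ?_⟩
  · rw [mem_wordsOfLength.1 hp, mem_wordsOfLength.1 hq]
  · exact ⟨y.take n, mem_wordsOfLength.2 (List.length_take_of_le (hn.trans hy)),
      List.take_prefix n y⟩

section Blocks

variable {A : Type*} {X : Set (InfTree A)}

theorem memBlocks.exists_extend {n : ℕ} {u : List Bool → A} (hu : memBlocks X n u) (N : ℕ) :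
    ∃ U, memBlocks X N U ∧ ∀ y : List Bool, y.length < n → U y = u y := by
  obtain ⟨t, ht, x, hx⟩ := hu
  exact ⟨fun y => t (x ++ y), ⟨t, ht, x, fun y _ => rfl⟩, hx⟩

theorem blockEqAt.restrict {t : InfTree A} {x : List Bool} {n N : ℕ} {u U : List Bool → A}
    (h : blockEqAt t x N U) (hnN : n ≤ N) (hUu : ∀ y : List Bool, y.length < n → U y = u y) :
    blockEqAt t x n u :=
  fun y hy => (h y (hy.trans_le hnN)).trans (hUu y hy)

/-- Condition (ii) of the characterization of irreducibility. -/
def IrreducibleByCPSFamily (X : Set (InfTree A)) : Prop :=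
  ∀ n m : ℕ, 0 < n → 0 < m → ∀ u v : List Bool → A,
    memBlocks X n u → memBlocks X m v →
    ∃ Pf : List Bool → Finset (List Bool),
      (∀ w : List Bool, w.length = n - 1 → IsCPS (Pf w)) ∧
      ∃ t ∈ X, blockEqAt t [] n u ∧
        ∀ w : List Bool, w.length = n - 1 → ∀ x ∈ Pf w, blockEqAt t (w ++ x) m v

/-- Condition (iii) of the characterization of irreducibility. -/
def IrreducibleByFinitelyManyCPS (X : Set (InfTree A)) : Prop :=
  ∀ n m : ℕ, 0 < n → 0 < m → ∀ u v : List Bool → A,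
    memBlocks X n u → memBlocks X m v →
    ∃ (l : ℕ) (Ps : Fin l → Finset (List Bool)),
      (∀ k : Fin l, IsCPS (Ps k)) ∧
      ∃ t ∈ X, blockEqAt t [] n u ∧
        ∀ w : List Bool, w.length = n - 1 →
          ∃ k : Fin l, ∀ x ∈ Ps k, blockEqAt t (w ++ x) m v

theorem IrreducibleTS.irreducibleByCPSFamily (hX : IrreducibleTS X) :
    IrreducibleByCPSFamily X := by
  intro n m hn hm u v hu hv
  obtain ⟨U, hU, hUu⟩ := hu.exists_extend (max n m)
  obtain ⟨V, hV, hVv⟩ := hv.exists_extend (max n m)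
  obtain ⟨t, htX, P, hP, hPlen, htU, htV⟩ := hX (max n m) (by omega) U V hU hV
  refine ⟨fun w => leftQuotient w P, fun w hw => hP.leftQuotient fun p hp => ?_, t, htX,
    htU.restrict (le_max_left n m) hUu,
    fun w _ x hx => (htV _ (mem_leftQuotient.1 hx)).restrict (le_max_right n m) hVv⟩
  have := hPlen p hp
  omega

theorem IrreducibleByCPSFamily.irreducibleTS (hX : IrreducibleByCPSFamily X) :
    IrreducibleTS X := by
  intro n hn u v hu hv
  obtain ⟨U, hU, hUu⟩ := hu.exists_extend (n + 1)
  obtain ⟨Q, hQ, t, htX, htU, htv⟩ := hX (n + 1) n (by omega) hn U v hU hv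
  refine ⟨t, htX, graft (wordsOfLength n) Q,
    (isCPS_wordsOfLength n).graft fun w hw => hQ w (mem_wordsOfLength.1 hw), ?_,
    htU.restrict n.le_succ hUu, ?_⟩
  · intro p hp
    obtain ⟨w, hw, x, -, rfl⟩ := mem_graft.1 hp
    simp [mem_wordsOfLength.1 hw]
  · intro p hp
    obtain ⟨w, hw, x, hx, rfl⟩ := mem_graft.1 hp
    exact htv w (mem_wordsOfLength.1 hw) x hx

theorem IrreducibleByCPSFamily.irreducibleByFinitelyManyCPS (hX : IrreducibleByCPSFamily X) :
    IrreducibleByFinitelyManyCPS X := by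
  intro n m hn hm u v hu hv
  obtain ⟨Q, hQ, t, htX, htu, htv⟩ := hX n m hn hm u v hu hv
  set S := (wordsOfLength (n - 1)).image Q
  refine ⟨S.card, fun k => S.equivFin.symm k, fun k => ?_, t, htX, htu, fun w hw =>
    ⟨S.equivFin ⟨Q w, mem_image_of_mem Q (mem_wordsOfLength.2 hw)⟩, by simpa using htv w hw⟩⟩
  obtain ⟨w, hw, hQw⟩ := mem_image.1 (S.equivFin.symm k).2
  simpa only [← hQw] using hQ w (mem_wordsOfLength.1 hw)

theorem IrreducibleByFinitelyManyCPS.irreducibleByCPSFamily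
    (hX : IrreducibleByFinitelyManyCPS X) : IrreducibleByCPSFamily X := by
  classical
  intro n m hn hm u v hu hv
  obtain ⟨l, Ps, hPs, t, htX, htu, htv⟩ := hX n m hn hm u v hu hv
  choose k hk using htv
  refine ⟨fun w => if hw : w.length = n - 1 then Ps (k w hw) else ∅, fun w hw => ?_, t, htX, htu,
    fun w hw => ?_⟩
  · simpa [hw] using hPs (k w hw)
  · simpa [hw] using hk w hw

end Blocks

theorem irreducible_iff_equiv_defs_general {A : Type} (X : Set (InfTree A)) :
    (IrreducibleTS X ↔
      (∀ n m : ℕ, 0 < n → 0 < m → ∀ u v : List Bool → A,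
        memBlocks X n u → memBlocks X m v →
        ∃ Pf : List Bool → Finset (List Bool),
          (∀ w : List Bool, w.length = n - 1 → IsCPS (Pf w)) ∧
          ∃ t ∈ X, blockEqAt t [] n u ∧
            ∀ w : List Bool, w.length = n - 1 → ∀ x ∈ Pf w,
              blockEqAt t (w ++ x) m v)) ∧
    (IrreducibleTS X ↔
      (∀ n m : ℕ, 0 < n → 0 < m → ∀ u v : List Bool → A,
        memBlocks X n u → memBlocks X m v →
        ∃ (l : ℕ) (Ps : Fin l → Finset (List Bool)),
          (∀ k : Fin l, IsCPS (Ps k)) ∧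
          ∃ t ∈ X, blockEqAt t [] n u ∧
            ∀ w : List Bool, w.length = n - 1 →
              ∃ k : Fin l, ∀ x ∈ Ps k, blockEqAt t (w ++ x) m v)) :=
  ⟨⟨IrreducibleTS.irreducibleByCPSFamily, IrreducibleByCPSFamily.irreducibleTS⟩,
    ⟨fun h => IrreducibleByCPSFamily.irreducibleByFinitelyManyCPS h.irreducibleByCPSFamily,
      fun h => IrreducibleByCPSFamily.irreducibleTS
        (IrreducibleByFinitelyManyCPS.irreducibleByCPSFamily h)⟩⟩

/-- equivalent formulations of irreducibility of a tree-shift. -/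
theorem irreducible_iff_equiv_defs {A : Type} [Fintype A] (X : Set (InfTree A))
    (hX : IsTreeShift X) :
    (IrreducibleTS X ↔
      (∀ n m : ℕ, 0 < n → 0 < m → ∀ u v : List Bool → A,
        memBlocks X n u → memBlocks X m v →
        ∃ Pf : List Bool → Finset (List Bool),
          (∀ w : List Bool, w.length = n - 1 → IsCPS (Pf w)) ∧
          ∃ t ∈ X, blockEqAt t [] n u ∧
            ∀ w : List Bool, w.length = n - 1 → ∀ x ∈ Pf w,
              blockEqAt t (w ++ x) m v)) ∧
    (IrreducibleTS X ↔
      (∀ n m : ℕ, 0 < n → 0 < m → ∀ u v : List Bool → A,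
        memBlocks X n u → memBlocks X m v →
        ∃ (l : ℕ) (Ps : Fin l → Finset (List Bool)),
          (∀ k : Fin l, IsCPS (Ps k)) ∧
          ∃ t ∈ X, blockEqAt t [] n u ∧
            ∀ w : List Bool, w.length = n - 1 →
              ∃ k : Fin l, ∀ x ∈ Ps k, blockEqAt t (w ++ x) m v)) :=
  irreducible_iff_equiv_defs_general X
end

section
/- If X is an irreducible tree-shift, then X is topologically transitive: for any nonempty open sets U_1, U_2 ⊆ X there exists a word w ∈ Σ* such that σ_w(U_1) ∩ U_2 ≠ ∅. -/
/-!
A nonempty open set contains a cylinder, i.e. all trees of `X` with a prescribed `n`-block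
at the root. Irreducibility yields a tree with the first block at the root and the second at
every word `w` of a complete prefix set; shifting it by such a `w` maps a point of `U_1` into `U_2`.
-/

variable {A : Type*}

theorem IsTreeShift.treeShift_mem {X : Set (InfTree A)} (hX : IsTreeShift X)
    {t : InfTree A} (ht : t ∈ X) (w : List Bool) : treeShift w t ∈ X := by
  obtain ⟨F, rfl⟩ := hX
  intro p hp x hocc
  exact ht p hp (w ++ x) fun y hy => by
    simpa only [treeShift, List.append_assoc] using hocc y hy

theorem memBlocks_of_mem {X : Set (InfTree A)} {t : InfTree A} (ht : t ∈ X) (n : ℕ) :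
    memBlocks X n t :=
  ⟨t, ht, [], fun _ _ => rfl⟩

theorem IsCPS.nonempty_s4 {P : Finset (List Bool)} (hP : IsCPS P) : P.Nonempty := by
  obtain ⟨w, hw, -⟩ := hP.2 (List.replicate (maxLen P) false) (by simp)
  exact ⟨w, hw⟩

theorem treeDist_le_of_agree_below {t t' : InfTree A} {n : ℕ}
    (h : ∀ y : List Bool, y.length < n → t y = t' y) :
    treeDist t t' ≤ (2⁻¹ : ℝ) ^ n := by
  unfold treeDist
  split_ifs with heq
  · positivity
  · obtain ⟨x, hx⟩ := Function.ne_iff.mp heq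
    refine pow_le_pow_of_le_one (by norm_num) (by norm_num) (le_csInf ⟨_, x, rfl, hx⟩ ?_)
    rintro m ⟨y, rfl, hy⟩
    exact not_lt.mp fun hlt => hy (h y hlt)

theorem IsOpenIn.eventually_cylinder_subset {X U : Set (InfTree A)} (hU : IsOpenIn X U)
    {t : InfTree A} (ht : t ∈ U) :
    ∀ᶠ n in Filter.atTop, ∀ t' ∈ X, blockEqAt t' [] n t → t' ∈ U := by
  obtain ⟨ε, hε, hball⟩ := hU.2 t ht
  obtain ⟨n, hn⟩ := exists_pow_lt_of_lt_one hε (by norm_num : (2⁻¹ : ℝ) < 1)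
  filter_upwards [Filter.eventually_ge_atTop n] with m hm t' ht' hblock
  refine hball t' ht' ?_
  calc treeDist t t' ≤ (2⁻¹ : ℝ) ^ m := treeDist_le_of_agree_below fun y hy => (hblock y hy).symm
    _ ≤ (2⁻¹ : ℝ) ^ n := pow_le_pow_of_le_one (by norm_num) (by norm_num) hm
    _ < ε := hn

theorem IrreducibleTS.exists_treeShift_blockEqAt {X : Set (InfTree A)} (hirr : IrreducibleTS X)
    {n : ℕ} (hn : 0 < n) {u v : List Bool → A} (hu : memBlocks X n u) (hv : memBlocks X n v) :
    ∃ t ∈ X, ∃ w, blockEqAt t [] n u ∧ blockEqAt (treeShift w t) [] n v := by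
  obtain ⟨t, htX, P, hP, -, htu, htv⟩ := hirr n hn u v hu hv
  obtain ⟨w, hw⟩ := hP.nonempty_s4
  exact ⟨t, htX, w, htu, htv w hw⟩

theorem transitive_of_irreducible_general {A : Type} (X : Set (InfTree A))
    (hX : IsTreeShift X) (hirr : IrreducibleTS X) :
    ∀ U1 U2 : Set (InfTree A), IsOpenIn X U1 → IsOpenIn X U2 →
      U1.Nonempty → U2.Nonempty →
      ∃ w : List Bool, (treeShift w '' U1 ∩ U2).Nonempty := by
  intro U1 U2 hU1 hU2 ⟨t1, ht1⟩ ⟨t2, ht2⟩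
  obtain ⟨n, ⟨hsub1, hsub2⟩, hn⟩ := ((hU1.eventually_cylinder_subset ht1).and
    (hU2.eventually_cylinder_subset ht2)).and (Filter.eventually_gt_atTop 0) |>.exists
  obtain ⟨t, htX, w, ht1', ht2'⟩ := hirr.exists_treeShift_blockEqAt hn
    (memBlocks_of_mem (hU1.1 ht1) n) (memBlocks_of_mem (hU2.1 ht2) n)
  exact ⟨w, treeShift w t, ⟨t, hsub1 t htX ht1', rfl⟩, hsub2 _ (hX.treeShift_mem htX w) ht2'⟩

/-- an irreducible tree-shift is topologically transitive. -/
theorem transitive_of_irreducible {A : Type} [Fintype A] (X : Set (InfTree A))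
    (hX : IsTreeShift X) (hirr : IrreducibleTS X) :
    ∀ U1 U2 : Set (InfTree A), IsOpenIn X U1 → IsOpenIn X U2 →
      U1.Nonempty → U2.Nonempty →
      ∃ w : List Bool, (treeShift w '' U1 ∩ U2).Nonempty :=
  transitive_of_irreducible_general X hX hirr
end

section
/- Let X be the vertex tree-shift determined by n×n 0-1 matrices A_0 and A_1 whose graph representation is essential. If X is irreducible, then A_0 and A_1 are both irreducible matrices. -/
/-!
Read along a ray `x, xb, xbb, …`, a tree of the vertex tree-shift is a path in the graph of
`A_b`. Irreducibility, applied to the 1-blocks `i` and `j`, yields a tree with root `i` and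
label `j` on a complete prefix set `P` of words of length at least 1; since `P` meets the ray
`b, bb, bbb, …`, some entry `(A_b ^ k) i j` with `k ≥ 1` is positive. The 0-1 condition together
with essentiality makes every symbol the root of some tree, so that `i` and `j` are 1-blocks.
-/

theorem Matrix.pow_apply_pos_of_chain {ι : Type*} [Fintype ι] [DecidableEq ι]
    (M : Matrix ι ι ℕ) (f : ℕ → ι) (hf : ∀ m, 0 < M (f m) (f (m + 1))) (k : ℕ) :
    0 < (M ^ k) (f 0) (f k) := by
  induction k with
  | zero => simp
  | succ k ih =>
    rw [pow_succ, Matrix.mul_apply]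
    exact Finset.sum_pos' (fun _ _ => Nat.zero_le _)
      ⟨f k, Finset.mem_univ _, Nat.mul_pos ih (hf k)⟩

theorem blockEqAt_one_iff {A : Type*} {t : InfTree A} {x : List Bool} {u : List Bool → A} :
    blockEqAt t x 1 u ↔ t x = u [] := by
  simp [blockEqAt]

theorem memBlocks_one_of_mem {A : Type*} {X : Set (InfTree A)} {t : InfTree A} (ht : t ∈ X)
    (x : List Bool) : memBlocks X 1 (fun _ => t x) :=
  ⟨t, ht, x, blockEqAt_one_iff.2 rfl⟩

theorem IsCPS.exists_replicate_mem {P : Finset (List Bool)} (hP : IsCPS P) (b : Bool) :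
    ∃ k, List.replicate k b ∈ P := by
  obtain ⟨p, hpP, hp⟩ := hP.2 (List.replicate (maxLen P) b) (by simp)
  exact ⟨p.length, (List.prefix_replicate_iff.1 hp).2 ▸ hpP⟩

section VertexTreeShift

variable {n : ℕ} {A0 A1 : Matrix (Fin n) (Fin n) ℕ}

theorem mem_vertexTreeShift_iff {t : InfTree (Fin n)} :
    t ∈ vertexTreeShift A0 A1 ↔
      ∀ x (b : Bool), (if b then A1 else A0) (t x) (t (x ++ [b])) = 1 := by
  simp only [vertexTreeShift, Set.mem_ofPred_eq, Bool.forall_bool]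
  exact ⟨fun h x => h x, fun h x => h x⟩

theorem exists_mem_vertexTreeShift_root_eq (hA0 : ∀ i, ∃ j, A0 i j = 1)
    (hA1 : ∀ i, ∃ j, A1 i j = 1) (i : Fin n) :
    ∃ t ∈ vertexTreeShift A0 A1, t [] = i := by
  choose f0 hf0 using hA0
  choose f1 hf1 using hA1
  refine ⟨fun x => x.foldl (fun j b => if b then f1 j else f0 j) i,
    mem_vertexTreeShift_iff.2 fun x b => ?_, rfl⟩
  cases b <;> simp [hf0, hf1]

theorem pow_apply_pos_of_mem_vertexTreeShift {t : InfTree (Fin n)}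
    (ht : t ∈ vertexTreeShift A0 A1) (b : Bool) (x : List Bool) (k : ℕ) :
    0 < ((if b then A1 else A0) ^ k) (t x) (t (x ++ List.replicate k b)) := by
  simpa using (if b then A1 else A0).pow_apply_pos_of_chain
    (fun m => t (x ++ List.replicate m b))
    (fun m => by simp [List.replicate_succ', ← List.append_assoc, mem_vertexTreeShift_iff.1 ht]) k

theorem matIrreducible_of_irreducibleTS_vertexTreeShift
    (hroot : ∀ i, ∃ t ∈ vertexTreeShift A0 A1, t [] = i)
    (hirr : IrreducibleTS (vertexTreeShift A0 A1)) (b : Bool) :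
    MatIrreducible (if b then A1 else A0) := by
  intro i j
  obtain ⟨ti, hti, rfl⟩ := hroot i
  obtain ⟨tj, htj, rfl⟩ := hroot j
  obtain ⟨t, ht, P, hP, hlen, hroot_eq, hP_eq⟩ :=
    hirr 1 one_pos _ _ (memBlocks_one_of_mem hti []) (memBlocks_one_of_mem htj [])
  obtain ⟨k, hk⟩ := hP.exists_replicate_mem b
  refine ⟨k, by simpa using hlen _ hk, ?_⟩
  rw [blockEqAt_one_iff] at hroot_eq
  have hk_eq := blockEqAt_one_iff.1 (hP_eq _ hk)
  simpa [hroot_eq, hk_eq] using pow_apply_pos_of_mem_vertexTreeShift ht b [] k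

end VertexTreeShift

/-- if an essential vertex tree-shift is irreducible, then both of its
transition matrices are irreducible. -/
theorem matrices_irreducible_of_irreducible_vertexTreeShift {n : ℕ}
    (A0 A1 : Matrix (Fin n) (Fin n) ℕ) (h0 : ZeroOne A0) (h1 : ZeroOne A1)
    (hess : EssentialPair A0 A1) (hirr : IrreducibleTS (vertexTreeShift A0 A1)) :
    MatIrreducible A0 ∧ MatIrreducible A1 := by
  obtain ⟨hrow0, -, hrow1, -⟩ := hess
  have hroot : ∀ i, ∃ t ∈ vertexTreeShift A0 A1, t [] = i :=
    exists_mem_vertexTreeShift_root_eq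
      (fun i => (hrow0 i).imp fun j => le_antisymm (h0 i j))
      (fun i => (hrow1 i).imp fun j => le_antisymm (h1 i j))
  exact ⟨matIrreducible_of_irreducibleTS_vertexTreeShift hroot hirr false,
    matIrreducible_of_irreducibleTS_vertexTreeShift hroot hirr true⟩
end

section
/- Let X be the vertex tree-shift determined by n×n 0-1 matrices A_0 and A_1 whose graph representation is essential, and suppose A_0 = A_1 = A. Then X is irreducible if and only if the matrix A is irreducible. -/
section Aux
variable {n : ℕ} (A : Matrix (Fin n) (Fin n) ℕ)

lemma exists_path_of_pow_pos : ∀ {k : ℕ} {i j : Fin n}, 0 < (A ^ k) i j →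
    ∃ f : ℕ → Fin n, f 0 = i ∧ f k = j ∧ ∀ l < k, 0 < A (f l) (f (l+1)) := by
  intro k
  induction k with
  | zero =>
    intro i j h
    have hij : i = j := by
      by_contra hne
      simp [Matrix.one_apply, hne] at h
    exact ⟨fun _ => i, rfl, hij, by omega⟩
  | succ k ih =>
    intro i j h
    rw [pow_succ, Matrix.mul_apply] at h
    obtain ⟨m, -, hm⟩ := Finset.exists_lt_of_sum_lt (f := fun _ => 0) (by simpa using h)
    have h1 : 0 < (A ^ k) i m := by
      rcases Nat.eq_zero_or_pos ((A ^ k) i m) with h0 | h0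
      · simp [h0] at hm
      · exact h0
    have h2 : 0 < A m j := by
      rcases Nat.eq_zero_or_pos (A m j) with h0 | h0
      · simp [h0] at hm
      · exact h0
    obtain ⟨f, hf0, hfk, hft⟩ := ih h1
    refine ⟨fun l => if l ≤ k then f l else j, by simp [hf0], by simp, ?_⟩
    intro l hl
    simp only []
    rcases Nat.lt_or_ge l k with h' | h'
    · have e1 : l ≤ k := by omega
      have e2 : l + 1 ≤ k := by omega
      simpa [e1, e2] using hft l h'
    · have hlk : l = k := by omega
      have e1 : l ≤ k := by omega
      have e2 : ¬ (l + 1 ≤ k) := by omega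
      simpa [e1, e2, hlk, hfk] using h2

lemma pow_pos_along {t : List Bool → Fin n} (ht : t ∈ vertexTreeShift A A) :
    ∀ (p x : List Bool), 0 < (A ^ p.length) (t x) (t (x ++ p)) := by
  intro p
  induction p with
  | nil => intro x; simp [Matrix.one_apply]
  | cons b q ih =>
    intro x
    have hb : 0 < A (t x) (t (x ++ [b])) := by
      rcases b with _ | _
      · rw [(ht x).1]; norm_num
      · rw [(ht x).2]; norm_num
    have hq := ih (x ++ [b])
    have : x ++ [b] ++ q = x ++ b :: q := by simp
    rw [this] at hq
    have key : A (t x) (t (x ++ [b])) * (A ^ q.length) (t (x ++ [b])) (t (x ++ b :: q))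
        ≤ (A ^ (b :: q).length) (t x) (t (x ++ b :: q)) := by
      rw [List.length_cons, pow_succ', Matrix.mul_apply]
      exact Finset.single_le_sum (f := fun m => A (t x) m * (A ^ q.length) m (t (x ++ b :: q)))
        (fun _ _ => Nat.zero_le _) (Finset.mem_univ _)
    exact lt_of_lt_of_le (Nat.mul_pos hb hq) key

lemma shift_mem {t : List Bool → Fin n} (ht : t ∈ vertexTreeShift A A) (w : List Bool) :
    (fun x => t (w ++ x)) ∈ vertexTreeShift A A := by
  intro x
  refine ⟨?_, ?_⟩
  · simpa [List.append_assoc] using (ht (w ++ x)).1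
  · simpa [List.append_assoc] using (ht (w ++ x)).2

end Aux

/-- if `A_0 = A_1 = A` (essential), the vertex tree-shift is irreducible
iff the matrix `A` is irreducible. -/
theorem vertexTreeShift_irreducible_iff_matIrreducible {n : ℕ}
    (A : Matrix (Fin n) (Fin n) ℕ) (hA : ZeroOne A) (hess : EssentialPair A A) :
    IrreducibleTS (vertexTreeShift A A) ↔ MatIrreducible A := by
  constructor
  · -- irreducible tree-shift implies irreducible matrix
    intro hirr i j
    obtain ⟨f, hf⟩ := Classical.axiomOfChoice hess.1
    set t0 : Fin n → InfTree (Fin n) := fun i0 x => f^[x.length] i0 with ht0def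
    have ht0 : ∀ i0, t0 i0 ∈ vertexTreeShift A A := by
      intro i0 x
      have hstep : ∀ b : Bool, A (t0 i0 x) (t0 i0 (x ++ [b])) = 1 := by
        intro b
        have h1 : t0 i0 (x ++ [b]) = f (t0 i0 x) := by
          simp [ht0def, Function.iterate_succ_apply']
        rw [h1]
        exact le_antisymm (hA _ _) (hf (t0 i0 x))
      exact ⟨hstep false, hstep true⟩
    have hmem : ∀ i0 : Fin n, memBlocks (vertexTreeShift A A) 1 (fun _ => i0) := by
      intro i0
      refine ⟨t0 i0, ht0 i0, [], ?_⟩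
      intro y hy
      have : y = [] := List.length_eq_zero_iff.1 (by omega)
      simp [this, ht0def]
    obtain ⟨t, ht, P, hP, hlen, hu0, hv0⟩ :=
      hirr 1 one_pos (fun _ => i) (fun _ => j) (hmem i) (hmem j)
    obtain ⟨p, hpP, -⟩ := hP.2 (List.replicate (maxLen P) false) (by simp)
    refine ⟨p.length, hlen p hpP, ?_⟩
    have h1 : t [] = i := by simpa using hu0 [] (by simp)
    have h2 : t p = j := by simpa using hv0 p hpP [] (by simp)
    have := pow_pos_along A ht p []
    rwa [List.nil_append, h1, h2] at this
  · -- irreducible matrix implies irreducible tree-shift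
    intro hirrA N hn u v hu hv
    obtain ⟨tu, htu, xu, hbu⟩ := hu
    obtain ⟨tv, htv, xv, hbv⟩ := hv
    set s : InfTree (Fin n) := fun x => tu (xu ++ x) with hsdef
    set r : InfTree (Fin n) := fun x => tv (xv ++ x) with hrdef
    have hs : s ∈ vertexTreeShift A A := shift_mem A htu xu
    have hr : r ∈ vertexTreeShift A A := shift_mem A htv xv
    have hsu : ∀ y : List Bool, y.length < N → s y = u y := by
      intro y hy; simpa using hbu y hy
    have hrv : ∀ y : List Bool, y.length < N → r y = v y := by
      intro y hy; simpa using hbv y hy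
    set j : Fin n := r [] with hjdef
    have hpath : ∀ i : Fin n, ∃ kf : ℕ, ∃ pf : ℕ → Fin n,
        1 ≤ kf ∧ pf 0 = i ∧ pf kf = j ∧ ∀ l < kf, 0 < A (pf l) (pf (l+1)) := by
      intro i
      obtain ⟨k, hk1, hkpos⟩ := hirrA i j
      obtain ⟨g, h0, hk, htr⟩ := exists_path_of_pow_pos A hkpos
      exact ⟨k, g, hk1, h0, hk, htr⟩
    choose kf pf hk1 hpf0 hpfk hpft using hpath
    set M : ℕ := N - 1 with hMdef
    have hMN : M + 1 = N := by omega
    classical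
    set t : InfTree (Fin n) := fun x =>
      if x.length ≤ M then s x
      else if x.length - M ≤ kf (s (x.take M)) then pf (s (x.take M)) (x.length - M)
      else r (x.drop (M + kf (s (x.take M)))) with htdef
    have key0 : ∀ x : List Bool, x.length ≤ M → t x = s x := by
      intro x hx
      simp only [htdef]
      rw [if_pos hx]
    have key1 : ∀ x : List Bool, M ≤ x.length → x.length - M ≤ kf (s (x.take M)) →
        t x = pf (s (x.take M)) (x.length - M) := by
      intro x h1 h2
      by_cases h : x.length ≤ M
      · have hxM : x.length = M := le_antisymm h h1
        have htk : x.take M = x := List.take_of_length_le (le_of_eq hxM)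
        have hz : x.length - M = 0 := by omega
        rw [key0 x h, hz, htk, hpf0]
      · simp only [htdef]
        rw [if_neg h, if_pos h2]
    have key2 : ∀ x : List Bool, M + kf (s (x.take M)) < x.length →
        t x = r (x.drop (M + kf (s (x.take M)))) := by
      intro x hx
      have h1 : ¬ x.length ≤ M := by omega
      have h2 : ¬ x.length - M ≤ kf (s (x.take M)) := by omega
      simp only [htdef]
      rw [if_neg h1, if_neg h2]
    -- t belongs to the tree-shift
    have step : ∀ (x : List Bool) (b : Bool), A (t x) (t (x ++ [b])) = 1 := by
      intro x b
      have hone : ∀ z : List Bool, A (s z) (s (z ++ [b])) = 1 := by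
        intro z; rcases b with _ | _
        · exact (hs z).1
        · exact (hs z).2
      have honeR : ∀ z : List Bool, A (r z) (r (z ++ [b])) = 1 := by
        intro z; rcases b with _ | _
        · exact (hr z).1
        · exact (hr z).2
      have hlenx : (x ++ [b]).length = x.length + 1 := by simp
      by_cases h1 : x.length < M
      · rw [key0 x (by omega), key0 (x ++ [b]) (by omega)]
        exact hone x
      · have hM : M ≤ x.length := by omega
        have htake : (x ++ [b]).take M = x.take M :=
          List.take_append_of_le_length hM
        by_cases h2 : x.length - M < kf (s (x.take M))
        · rw [key1 x hM (by omega),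
              key1 (x ++ [b]) (by omega) (by rw [htake]; omega)]
          rw [htake]
          have hd1 : (x ++ [b]).length - M = (x.length - M) + 1 := by omega
          rw [hd1]
          exact le_antisymm (hA _ _) (hpft _ (x.length - M) h2)
        · by_cases h3 : x.length - M = kf (s (x.take M))
          · rw [key1 x hM (by omega), key2 (x ++ [b]) (by rw [htake]; omega)]
            rw [htake]
            have hdrop : (x ++ [b]).drop (M + kf (s (x.take M))) = [b] := by
              have he : M + kf (s (x.take M)) = x.length := by omega
              rw [he]
              exact List.drop_left
            rw [hdrop, h3, hpfk]
            simpa using honeR []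
          · -- x.length - M > kf i
            rw [key2 x (by omega), key2 (x ++ [b]) (by rw [htake]; omega)]
            rw [htake]
            have hdrop : (x ++ [b]).drop (M + kf (s (x.take M))) =
                x.drop (M + kf (s (x.take M))) ++ [b] :=
              List.drop_append_of_le_length (by omega)
            rw [hdrop]
            exact honeR _
    have htX : t ∈ vertexTreeShift A A := fun x => ⟨step x false, step x true⟩
    -- the complete prefix set
    set K : ℕ := (Finset.univ : Finset (Fin n)).sup kf with hKdef
    have hkK : ∀ i : Fin n, kf i ≤ K := fun i => Finset.le_sup (Finset.mem_univ i)
    set allLists : ℕ → Finset (List Bool) :=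
      fun l => Finset.image (List.ofFn : (Fin l → Bool) → List Bool) Finset.univ
        with hALdef
    have hAL : ∀ z : List Bool, z ∈ allLists z.length := by
      intro z
      exact Finset.mem_image.2 ⟨z.get, Finset.mem_univ _, List.ofFn_get z⟩
    set P : Finset (List Bool) :=
      ((Finset.range (M + K + 1)).biUnion allLists).filter
        (fun z => z.length = M + kf (s (z.take M))) with hPdef
    have hmemP : ∀ z : List Bool, z ∈ P ↔ z.length = M + kf (s (z.take M)) := by
      intro z
      constructor
      · intro hz
        exact (Finset.mem_filter.1 hz).2
      · intro hz
        refine Finset.mem_filter.2 ⟨?_, hz⟩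
        refine Finset.mem_biUnion.2 ⟨z.length, Finset.mem_range.2 ?_, hAL z⟩
        have := hkK (s (z.take M))
        omega
    have hlenP : ∀ p ∈ P, N ≤ p.length := by
      intro p hp
      have h1 := (hmemP p).1 hp
      have h2 := hk1 (s (p.take M))
      omega
    -- intermediate: membership of the canonical elements
    have hPmem : ∀ w : List Bool, w.length = M →
        w ++ List.replicate (kf (s w)) false ∈ P := by
      intro w hw
      refine (hmemP _).2 ?_
      have htk : (w ++ List.replicate (kf (s w)) false).take M = w := by
        rw [List.take_append_of_le_length (le_of_eq hw.symm), List.take_of_length_le (le_of_eq hw)]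
      rw [htk]
      simp [hw]
    refine ⟨t, htX, P, ⟨?_, ?_⟩, hlenP, ?_, ?_⟩
    · -- prefix set
      intro p hp q hq hpq
      obtain ⟨c, rfl⟩ := hpq
      have h1 := (hmemP p).1 hp
      have h2 := (hmemP _).1 hq
      have hMp : M ≤ p.length := by have := hk1 (s (p.take M)); omega
      have htk : (p ++ c).take M = p.take M := List.take_append_of_le_length hMp
      rw [htk] at h2
      have : c.length = 0 := by
        have := (List.length_append : (p ++ c).length = p.length + c.length)
        omega
      have hc : c = [] := List.length_eq_zero_iff.1 this
      simp [hc]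
    · -- completeness
      intro x hx
      have hq0 : (List.replicate M false) ++
          List.replicate (kf (s (List.replicate M false))) false ∈ P :=
        hPmem _ (List.length_replicate : (List.replicate M false).length = M)
      have hmaxl : M < maxLen P := by
        have h1 : ((List.replicate M false) ++
            List.replicate (kf (s (List.replicate M false))) false).length ≤ maxLen P :=
          Finset.le_sup hq0
        have h2 := hk1 (s (List.replicate M false))
        simp only [List.length_append, List.length_replicate] at h1
        omega
      have hMx : M ≤ x.length := by omega
      set w : List Bool := x.take M with hwdef
      have hwlen : w.length = M := by
        rw [hwdef, List.length_take]; omega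
      have hq1 : w ++ List.replicate (kf (s w)) false ∈ P := hPmem w hwlen
      have hble : M + kf (s w) ≤ x.length := by
        have h1 : (w ++ List.replicate (kf (s w)) false).length ≤ maxLen P :=
          Finset.le_sup hq1
        simp only [List.length_append, List.length_replicate, hwlen] at h1
        omega
      refine ⟨x.take (M + kf (s w)), ?_, List.take_prefix _ x⟩
      refine (hmemP _).2 ?_
      have htk2 : (x.take (M + kf (s w))).take M = w := by
        rw [List.take_take, hwdef]
        congr 1
        omega
      rw [htk2, List.length_take]
      omega
    · -- block u at the root
      intro y hy
      rw [List.nil_append, key0 y (by omega)]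
      exact hsu y hy
    · -- block v at each p ∈ P
      intro p hp y hy
      have h1 := (hmemP p).1 hp
      have hMp : M ≤ p.length := by have := hk1 (s (p.take M)); omega
      have htk : (p ++ y).take M = p.take M := List.take_append_of_le_length hMp
      have hgoal : t (p ++ y) = r y := by
        rcases List.eq_nil_or_concat y with hy0 | ⟨z, b, hzb⟩
        · subst hy0
          rw [List.append_nil]
          rw [key1 p hMp (by omega)]
          have : p.length - M = kf (s (p.take M)) := by omega
          rw [this, hpfk]
        · have hylen : 1 ≤ y.length := by subst hzb; simp
          have hlen2 : (p ++ y).length = p.length + y.length := List.length_append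
          rw [key2 (p ++ y) (by rw [htk]; omega)]
          rw [htk, ← h1, List.drop_left]
      rw [hgoal]
      exact hrv y hy
end

section
/- Let X be the vertex tree-shift determined by n×n 0-1 matrices A_0 and A_1 whose graph representation is essential, and suppose A_0 = A_1 = A. Then X is mixing if and only if the matrix A is primitive. -/
-- AUX below

lemma vts_step {n : ℕ} {A : Matrix (Fin n) (Fin n) ℕ} {t : InfTree (Fin n)}
    (ht : t ∈ vertexTreeShift A A) (x : List Bool) (b : Bool) :
    A (t x) (t (x ++ [b])) = 1 := by
  cases b
  · exact (ht x).1
  · exact (ht x).2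

lemma vts_shift {n : ℕ} {A : Matrix (Fin n) (Fin n) ℕ} {t : InfTree (Fin n)}
    (ht : t ∈ vertexTreeShift A A) (w : List Bool) :
    treeShift w t ∈ vertexTreeShift A A := by
  intro x
  constructor
  · simp only [treeShift, ← List.append_assoc]
    exact vts_step ht (w ++ x) false
  · simp only [treeShift, ← List.append_assoc]
    exact vts_step ht (w ++ x) true

lemma vts_path_pos {n : ℕ} {A : Matrix (Fin n) (Fin n) ℕ} {t : InfTree (Fin n)}
    (ht : t ∈ vertexTreeShift A A) (y z : List Bool) :
    0 < (A ^ z.length) (t y) (t (y ++ z)) := by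
  induction z using List.reverseRecOn with
  | nil => simp [Matrix.one_apply_eq]
  | append_singleton z b ih =>
      rw [← List.append_assoc]
      have hlen : (z ++ [b]).length = z.length + 1 := by simp
      rw [hlen, pow_succ, Matrix.mul_apply]
      have hterm : 0 < (A ^ z.length) (t y) (t (y ++ z)) * A (t (y ++ z)) (t ((y ++ z) ++ [b])) := by
        rw [vts_step ht (y ++ z) b]
        simpa using ih
      calc 0 < _ := hterm
        _ ≤ ∑ c, (A ^ z.length) (t y) c * A c (t ((y ++ z) ++ [b])) :=
          Finset.single_le_sum
            (f := fun c => (A ^ z.length) (t y) c * A c (t ((y ++ z) ++ [b])))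
            (fun c _ => Nat.zero_le _) (Finset.mem_univ _)

lemma exists_path {n : ℕ} {A : Matrix (Fin n) (Fin n) ℕ} :
    ∀ (k : ℕ) (i j : Fin n), 0 < (A ^ k) i j →
      ∃ c : ℕ → Fin n, c 0 = i ∧ c k = j ∧ ∀ d < k, 0 < A (c d) (c (d + 1)) := by
  intro k
  induction k with
  | zero =>
      intro i j h
      rw [pow_zero] at h
      have hij : i = j := by
        by_contra hne
        rw [Matrix.one_apply_ne hne] at h
        exact lt_irrefl 0 h
      exact ⟨fun _ => i, rfl, hij ▸ rfl, fun d hd => absurd hd (Nat.not_lt_zero d)⟩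
  | succ k ih =>
      intro i j h
      rw [pow_succ, Matrix.mul_apply] at h
      have : ∃ l, 0 < (A ^ k) i l * A l j := by
        by_contra hc
        push_neg at hc
        have : ∀ l ∈ Finset.univ, (A ^ k) i l * A l j = 0 :=
          fun l _ => Nat.eq_zero_of_le_zero (hc l)
        rw [Finset.sum_eq_zero this] at h
        exact lt_irrefl 0 h
      obtain ⟨l, hl⟩ := this
      have h1 : 0 < (A ^ k) i l := Nat.pos_of_ne_zero fun h0 => by simp [h0] at hl
      have h2 : 0 < A l j := Nat.pos_of_ne_zero fun h0 => by simp [h0] at hl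
      obtain ⟨c, hc0, hck, hchain⟩ := ih i l h1
      refine ⟨fun d => if d ≤ k then c d else j, by simp [hc0], by simp, ?_⟩
      intro d hd
      rcases Nat.lt_or_ge d k with hdk | hdk
      · simp only [if_pos hdk.le, if_pos (Nat.succ_le_of_lt hdk)]
        exact hchain d hdk
      · have hdk' : d = k := Nat.le_antisymm (Nat.lt_succ_iff.mp hd) hdk
        subst hdk'
        simp only [le_refl, if_pos, if_neg (Nat.not_succ_le_self d)]
        rw [hck]
        exact h2

def fullP (k : ℕ) : Finset (List Bool) :=
  (Finset.univ : Finset (Fin k → Bool)).image List.ofFn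

lemma mem_fullP {k : ℕ} {l : List Bool} : l ∈ fullP k ↔ l.length = k := by
  simp only [fullP, Finset.mem_image, Finset.mem_univ, true_and]
  constructor
  · rintro ⟨f, rfl⟩; simp
  · intro h
    refine ⟨fun i => l.get (Fin.cast h.symm i), ?_⟩
    apply List.ext_getElem
    · simp [h]
    · intro m h1 h2
      simp [List.getElem_ofFn]

lemma fullP_CPS (k : ℕ) : IsCPS (fullP k) := by
  have hmax : maxLen (fullP k) = k := by
    apply le_antisymm
    · exact Finset.sup_le fun l hl => (mem_fullP.1 hl).le
    · have : List.replicate k false ∈ fullP k := mem_fullP.2 (by simp)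
      simpa [maxLen] using Finset.le_sup (f := List.length) this
  constructor
  · intro p hp q hq hpq
    exact hpq.eq_of_length ((mem_fullP.1 hp).trans (mem_fullP.1 hq).symm)
  · intro x hx
    rw [hmax] at hx
    exact ⟨x.take k, mem_fullP.2 (by simp [hx]), List.take_prefix k x⟩

def glueTree {α : Type*} (n1 N : ℕ) (tu : InfTree α) (pth : α → ℕ → α) (tv : InfTree α) :
    InfTree α :=
  fun y =>
    if y.length ≤ n1 then tu y
    else if y.length ≤ N then pth (tu (y.take n1)) (y.length - n1)
    else tv (y.drop N)

theorem main_rev {n : ℕ} (A : Matrix (Fin n) (Fin n) ℕ) (hA : ZeroOne A)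
    {k : ℕ} (hk : 1 ≤ k) (hApos : ∀ i j, 0 < (A ^ k) i j) :
    ∃ P0 P1 : Finset (List Bool), IsCPS P0 ∧ IsCPS P1 ∧
    ∀ bn bm : ℕ, 0 < bn → 0 < bm → ∀ u v : List Bool → Fin n,
      memBlocks (vertexTreeShift A A) bn u → memBlocks (vertexTreeShift A A) bm v →
      ∃ t ∈ vertexTreeShift A A, blockEqAt t [] bn u ∧
        ∀ w : List Bool, w.length = bn - 1 → ∀ b : Bool, w.getLast? = some b →
          ∀ x ∈ (if b then P1 else P0), blockEqAt t (w ++ x) bm v := by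
  refine ⟨fullP k, fullP k, fullP_CPS k, fullP_CPS k, ?_⟩
  intro bn bm hbn hbm u v hu hv
  obtain ⟨tu', htu', xu, hxu⟩ := hu
  obtain ⟨tv', htv', xv, hxv⟩ := hv
  have htu : treeShift xu tu' ∈ vertexTreeShift A A := vts_shift htu' xu
  have hu0 : ∀ y, y.length < bn → (treeShift xu tu') y = u y := fun y hy => hxu y hy
  have htv : treeShift xv tv' ∈ vertexTreeShift A A := vts_shift htv' xv
  have hv0 : ∀ y, y.length < bm → (treeShift xv tv') y = v y := fun y hy => hxv y hy
  set tu := treeShift xu tu' with htudef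
  set tv := treeShift xv tv' with htvdef
  have hpath : ∀ i : Fin n, ∃ c : ℕ → Fin n,
      c 0 = i ∧ c k = tv [] ∧ ∀ d < k, 0 < A (c d) (c (d + 1)) :=
    fun i => exists_path k i (tv []) (hApos i (tv []))
  choose pth hp0 hpk hpstep using hpath
  set n1 := bn - 1 with hn1
  set N := bn - 1 + k with hN
  set T := glueTree n1 N tu pth tv with hTdef
  have hTlow : ∀ y : List Bool, y.length ≤ n1 → T y = tu y := by
    intro y hy
    simp only [hTdef, glueTree, if_pos hy]
  have hTmid : ∀ y : List Bool, n1 ≤ y.length → y.length ≤ N →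
      T y = pth (tu (y.take n1)) (y.length - n1) := by
    intro y h1 h2
    by_cases h : y.length ≤ n1
    · have he : y.length = n1 := le_antisymm h h1
      rw [hTlow y h, he, Nat.sub_self, hp0, List.take_of_length_le he.le]
    · simp only [hTdef, glueTree, if_neg h, if_pos h2]
  have hThigh : ∀ y : List Bool, N < y.length → T y = tv (y.drop N) := by
    intro y hy
    have h1 : ¬ y.length ≤ n1 := by omega
    have h2 : ¬ y.length ≤ N := by omega
    simp only [hTdef, glueTree, if_neg h1, if_neg h2]
  have hTN : ∀ y : List Bool, y.length = N → T y = tv [] := by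
    intro y hy
    rw [hTmid y (by omega) (by omega), hy]
    have h : N - n1 = k := by omega
    rw [h, hpk]
  have hstep : ∀ (x : List Bool) (b : Bool), A (T x) (T (x ++ [b])) = 1 := by
    intro x b
    have hlen : (x ++ [b]).length = x.length + 1 := by simp
    by_cases hA1 : x.length + 1 ≤ n1
    · rw [hTlow x (by omega), hTlow _ (by rw [hlen]; omega)]
      exact vts_step htu x b
    · by_cases hA2 : x.length + 1 ≤ N
      · rw [hTmid x (by omega) (by omega),
           hTmid (x ++ [b]) (by rw [hlen]; omega) (by rw [hlen]; omega)]
        have htake : (x ++ [b]).take n1 = x.take n1 :=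
          List.take_append_of_le_length (by omega)
        rw [hlen, htake]
        have hd : x.length + 1 - n1 = (x.length - n1) + 1 := by omega
        rw [hd]
        exact le_antisymm (hA _ _) (hpstep (tu (x.take n1)) (x.length - n1) (by omega))
      · by_cases hA3 : x.length = N
        · rw [hTN x hA3, hThigh (x ++ [b]) (by rw [hlen]; omega)]
          have hdr : (x ++ [b]).drop N = [b] := by rw [← hA3, List.drop_left]
          rw [hdr]
          simpa using vts_step htv [] b
        · rw [hThigh x (by omega), hThigh (x ++ [b]) (by rw [hlen]; omega)]
          have hdr : (x ++ [b]).drop N = x.drop N ++ [b] :=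
            List.drop_append_of_le_length (by omega)
          rw [hdr]
          exact vts_step htv (x.drop N) b
  refine ⟨T, fun x => ⟨hstep x false, hstep x true⟩, ?_, ?_⟩
  · intro y hy
    simp only [List.nil_append]
    rw [hTlow y (by omega)]
    exact hu0 y hy
  · intro w hw b hb x hx
    have hxk : x.length = k := by
      have hxm : x ∈ fullP k := by cases b <;> simpa using hx
      exact mem_fullP.1 hxm
    have hwx : (w ++ x).length = N := by
      rw [List.length_append, hw, hxk]
    intro y hy
    rcases Nat.eq_zero_or_pos y.length with h0 | h0
    · have hy0 : y = [] := List.length_eq_zero_iff.mp h0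
      subst hy0
      rw [List.append_nil, hTN _ hwx]
      exact hv0 [] (by omega)
    · rw [hThigh _ (by rw [List.length_append, hwx]; omega)]
      have hdr : (w ++ x ++ y).drop N = y := by rw [← hwx, List.drop_left]
      rw [hdr]
      exact hv0 y hy


/-- if `A_0 = A_1 = A` (essential), the vertex tree-shift is mixing iff
the matrix `A` is primitive. -/
theorem vertexTreeShift_mixing_iff_matPrimitive {n : ℕ}
    (A : Matrix (Fin n) (Fin n) ℕ) (hA : ZeroOne A) (hess : EssentialPair A A) :
    MixingTS (vertexTreeShift A A) ↔ MatPrimitive A := by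
  constructor
  · rintro ⟨P0, P1, hC0, hC1, hmix⟩
    rcases Nat.eq_zero_or_pos n with hn | hn
    · subst hn
      exact ⟨1, le_rfl, fun i => i.elim0⟩
    · choose f hf0 using hess.1
      have hf : ∀ i, A i (f i) = 1 := fun i => le_antisymm (hA _ _) (hf0 i)
      have key : ∀ (l : ℕ) (i : Fin n), A (f^[l] i) (f^[l + 1] i) = 1 := by
        intro l i
        rw [Function.iterate_succ_apply']
        exact hf _
      have hsX : ∀ i : Fin n, (fun y : List Bool => f^[y.length] i) ∈ vertexTreeShift A A := by
        intro i x
        constructor <;> simpa using key x.length i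
      obtain ⟨x0, hx0, -⟩ := hC0.2 (List.replicate (maxLen P0) false) (by simp)
      refine ⟨x0.length + 1, Nat.succ_le_succ (Nat.zero_le _), fun i j => ?_⟩
      have hu : memBlocks (vertexTreeShift A A) 2 (fun y : List Bool => f^[y.length] i) :=
        ⟨_, hsX i, [], fun y _ => rfl⟩
      have hv : memBlocks (vertexTreeShift A A) 1 (fun y : List Bool => f^[y.length] j) :=
        ⟨_, hsX j, [], fun y _ => rfl⟩
      obtain ⟨t, htX, hroot, hcond⟩ := hmix 2 1 (by norm_num) (by norm_num) _ _ hu hv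
      have hti : t [] = i := by simpa using hroot [] (by norm_num)
      have hb := hcond [false] (by simp) false (by simp) x0 (by simpa using hx0)
      have htj : t ([false] ++ x0) = j := by simpa using hb [] (by norm_num)
      have hp := vts_path_pos htX [] ([false] ++ x0)
      rw [List.nil_append] at hp
      have hlen : ([false] ++ x0).length = x0.length + 1 := by
        simp [Nat.add_comm]
      rw [hlen, hti, htj] at hp
      exact hp
  · rintro ⟨k, hk, hApos⟩
    exact main_rev A hA hk hApos
end
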